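/- arXiv:0809.1332 — 4 statements merged into one kernel-verified Lean document; each statement's English description precedes it below -/
import Mathlib

section
/- Let L be a bounded linear order with bottom a and top b. Every lattice polynomial function p : L^n → L admits a disjunctive normal form: p(t) = ⋁_{A ⊆ [n], w(A)=b} ⋀_{i∈A} t_i, where w(A) = p(e_A^{a,b}) and e_A^{a,b} is the vector with i-th coordinate b if i ∈ A and a otherwise. -/
/-!
A lattice polynomial commutes with every monotone self-map of `L`, in particular with the
threshold maps `x ↦ if c ≤ x then ⊤ else ⊥`. Applied to `c = p t`, this shows that the set
`A = {i | p t ≤ t i}` has weight `⊤`, whence `p t ≤ ⋀_{i ∈ A} t i`. Conversely, if `w(A) = ⊤`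
and `c = ⋀_{i ∈ A} t i`, then `e_A` lies below the thresholded vector, so by monotonicity the
threshold of `p t` at `c` is `⊤`, i.e. `c ≤ p t`.
-/

/-- Lattice polynomial functions: the smallest class of functions `L^n → L` containing the
coordinate projections and closed under pointwise binary min and max. -/
inductive IsLatticePolynomial {L : Type*} [LinearOrder L] {n : ℕ} :
    ((Fin n → L) → L) → Prop
  | proj (k : Fin n) : IsLatticePolynomial (fun t => t k)
  | inf {p q : (Fin n → L) → L} : IsLatticePolynomial p → IsLatticePolynomial q →
      IsLatticePolynomial (fun t => p t ⊓ q t)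
  | sup {p q : (Fin n → L) → L} : IsLatticePolynomial p → IsLatticePolynomial q →
      IsLatticePolynomial (fun t => p t ⊔ q t)

section Threshold

variable {L : Type*} [LinearOrder L] [BoundedOrder L]

def threshold (c x : L) : L := if c ≤ x then ⊤ else ⊥

lemma monotone_threshold (c : L) : Monotone (threshold c) := by
  intro x y hxy
  unfold threshold
  split_ifs with hx hy
  · exact le_rfl
  · exact absurd (hx.trans hxy) hy
  · exact bot_le
  · exact le_rfl

lemma le_of_top_le_threshold {c x : L} (h : ⊤ ≤ threshold c x) : c ≤ x := by
  unfold threshold at h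
  split_ifs at h with hc
  · exact hc
  · exact le_top.trans (h.trans bot_le)

end Threshold

namespace IsLatticePolynomial

variable {L : Type*} [LinearOrder L] {n : ℕ} {p : (Fin n → L) → L}

lemma monotone (hp : IsLatticePolynomial p) : Monotone p := by
  induction hp with
  | proj k => exact fun s t h => h k
  | inf _ _ ihp ihq => exact fun s t h => inf_le_inf (ihp h) (ihq h)
  | sup _ _ ihp ihq => exact fun s t h => sup_le_sup (ihp h) (ihq h)

lemma comp_monotone (hp : IsLatticePolynomial p) {f : L → L} (hf : Monotone f)
    (t : Fin n → L) : p (f ∘ t) = f (p t) := by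
  induction hp with
  | proj k => rfl
  | inf _ _ ihp ihq => simp only [ihp, ihq, hf.map_min]
  | sup _ _ ihp ihq => simp only [ihp, ihq, hf.map_max]

variable [BoundedOrder L]

lemma eq_top_of_indicator_filter_le (hp : IsLatticePolynomial p) (t : Fin n → L) :
    p (fun i => if i ∈ Finset.univ.filter (fun i => p t ≤ t i) then ⊤ else ⊥) = ⊤ := by
  simp only [Finset.mem_filter, Finset.mem_univ, true_and]
  exact (hp.comp_monotone (monotone_threshold (p t)) t).trans (if_pos le_rfl)

lemma inf_le_of_indicator_eq_top (hp : IsLatticePolynomial p) {A : Finset (Fin n)}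
    (hA : p (fun i => if i ∈ A then ⊤ else ⊥) = ⊤) (t : Fin n → L) : A.inf t ≤ p t := by
  have h_indicator_le : (fun i => if i ∈ A then ⊤ else ⊥) ≤ threshold (A.inf t) ∘ t := by
    intro i
    by_cases hi : i ∈ A
    · simp only [hi, if_true, Function.comp_apply, threshold, if_pos (Finset.inf_le hi), le_rfl]
    · simp only [hi, if_false, bot_le]
  apply le_of_top_le_threshold
  calc ⊤ = p (fun i => if i ∈ A then ⊤ else ⊥) := hA.symm
    _ ≤ p (threshold (A.inf t) ∘ t) := hp.monotone h_indicator_le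
    _ = threshold (A.inf t) (p t) := hp.comp_monotone (monotone_threshold _) t

end IsLatticePolynomial

/-- Disjunctive normal form: `p(t) = ⋁_{A : w(A)=⊤} ⋀_{i∈A} t_i` with `w(A) = p(e_A^{⊥,⊤})`. -/
theorem latticePolynomial_disjunctive_normal_form {L : Type*} [LinearOrder L] [BoundedOrder L]
    {n : ℕ} (p : (Fin n → L) → L) (hp : IsLatticePolynomial p) (t : Fin n → L) :
    p t = (Finset.univ.filter fun A : Finset (Fin n) =>
        p (fun i => if i ∈ A then (⊤ : L) else ⊥) = ⊤).sup (fun A => A.inf t) := by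
  apply le_antisymm
  · exact Finset.le_sup_of_le
      (Finset.mem_filter.2 ⟨Finset.mem_univ _, hp.eq_top_of_indicator_filter_le t⟩)
      (Finset.le_inf fun i hi => (Finset.mem_filter.1 hi).2)
  · exact Finset.sup_le fun A hA => hp.inf_le_of_indicator_eq_top (Finset.mem_filter.1 hA).2 t
end

section
/- Let L be a linear order. A lattice polynomial function p : L^n → L satisfies p(t ∧ t') = p(t) ∧ p(t') for all t, t' ∈ L^n (where ∧ is taken componentwise) if and only if p(t) = ⋀_{i∈B} t_i for some nonempty subset B ⊆ [n]. -/
namespace Finset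

variable {α ι : Type*}

theorem inf'_inf_inf' [SemilatticeInf α] {s : Finset ι} (hs : s.Nonempty) (f g : ι → α) :
    s.inf' hs (fun i => f i ⊓ g i) = s.inf' hs f ⊓ s.inf' hs g :=
  eq_of_forall_le_iff fun c => by simp only [le_inf'_iff, le_inf_iff, forall_and]

theorem le_inf'_ite_iff_subset [SemilatticeInf α] [DecidableEq ι] {a b : α} (hab : a < b)
    {C : Finset ι} (hC : C.Nonempty) (D : Finset ι) :
    b ≤ C.inf' hC (fun i => if i ∈ D then b else a) ↔ C ⊆ D := by
  refine (le_inf'_iff hC _).trans (forall₂_congr fun i _ => ?_)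
  split_ifs with hi <;> simp [hi, hab.not_ge]

theorem sup'_inf'_eq_inf'_of_forall_subset [Lattice α] {S : Finset {C : Finset ι // C.Nonempty}}
    (hS : S.Nonempty) {C₀ : {C : Finset ι // C.Nonempty}} (hC₀ : C₀ ∈ S)
    (hmin : ∀ C ∈ S, C₀.1 ⊆ C.1) (t : ι → α) :
    S.sup' hS (fun C => C.1.inf' C.2 t) = C₀.1.inf' C₀.2 t :=
  le_antisymm (sup'_le _ _ fun C hC => inf'_mono _ (hmin C hC) C₀.2)
    (le_sup' (fun C : {C : Finset ι // C.Nonempty} => C.1.inf' C.2 t) hC₀)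

end Finset

namespace IsLatticePolynomial

variable {L : Type*} [LinearOrder L] {n : ℕ}

theorem exists_sup'_inf' {p : (Fin n → L) → L} (hp : IsLatticePolynomial p) :
    ∃ (S : Finset {C : Finset (Fin n) // C.Nonempty}) (hS : S.Nonempty),
      ∀ t, p t = S.sup' hS (fun C => C.1.inf' C.2 t) := by
  induction hp with
  | proj k =>
    exact ⟨{⟨{k}, Finset.singleton_nonempty k⟩}, Finset.singleton_nonempty _, fun t => by simp⟩
  | @inf p q _ _ ihp ihq =>
    obtain ⟨S, hS, hSp⟩ := ihp
    obtain ⟨T, hT, hTq⟩ := ihq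
    refine ⟨(S ×ˢ T).image fun CD => ⟨CD.1.1 ∪ CD.2.1, CD.1.2.mono Finset.subset_union_left⟩,
      (hS.product hT).image _, fun t => ?_⟩
    dsimp only
    rw [Finset.sup'_image, hSp t, hTq t, Finset.sup'_inf_sup']
    exact Finset.sup'_congr _ rfl fun CD _ => (Finset.inf'_union CD.1.2 CD.2.2 t).symm
  | @sup p q _ _ ihp ihq =>
    obtain ⟨S, hS, hSp⟩ := ihp
    obtain ⟨T, hT, hTq⟩ := ihq
    refine ⟨S ∪ T, hS.mono Finset.subset_union_left, fun t => ?_⟩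
    dsimp only
    rw [Finset.sup'_union hS hT, hSp t, hTq t]

theorem exists_eq_inf'_of_map_inf {p : (Fin n → L) → L} (hp : IsLatticePolynomial p)
    (hp_inf : ∀ t t' : Fin n → L, p (fun i => t i ⊓ t' i) = p t ⊓ p t') :
    ∃ (B : Finset (Fin n)) (hB : B.Nonempty), ∀ t : Fin n → L, p t = B.inf' hB t := by
  obtain ⟨S, hS, hpS⟩ := hp.exists_sup'_inf'
  rcases subsingleton_or_nontrivial L with hL | hL
  · obtain ⟨C, -⟩ := hS
    exact ⟨C.1, C.2, fun t => Subsingleton.elim _ _⟩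
  obtain ⟨a, b, hab⟩ := exists_pair_lt L
  classical
  let χ : Finset (Fin n) → Fin n → L := fun D i => if i ∈ D then b else a
  have hχ : ∀ C ∈ S, b ≤ p (χ C.1) := fun C hC => by
    rw [hpS, Finset.le_sup'_iff]
    exact ⟨C, hC, (Finset.le_inf'_ite_iff_subset hab C.2 C.1).2 subset_rfl⟩
  have hw : b ≤ p (S.inf' hS fun C => χ C.1) := by
    rw [Finset.apply_inf'_eq_inf'_comp hS p hp_inf, Finset.le_inf'_iff]
    exact hχ
  obtain ⟨C₀, hC₀, hbC₀⟩ := (Finset.le_sup'_iff hS).1 (hpS _ ▸ hw)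
  have hC₀_subset : ∀ C ∈ S, C₀.1 ⊆ C.1 := fun C hC =>
    (Finset.le_inf'_ite_iff_subset hab C₀.2 C.1).1 <| hbC₀.trans <| Finset.le_inf' _ _
      fun i hi => Finset.inf'_le_of_le _ hi (Finset.inf'_le (fun C => χ C.1) hC i)
  exact ⟨C₀.1, C₀.2, fun t => (hpS t).trans
    (Finset.sup'_inf'_eq_inf'_of_forall_subset hS hC₀ hC₀_subset t)⟩

end IsLatticePolynomial

/-- A lattice polynomial function distributes over componentwise minimum iff it is a minimum
over a nonempty subset of its variables. -/
theorem latticePolynomial_min_homomorphism_iff {L : Type*} [LinearOrder L] {n : ℕ}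
    (p : (Fin n → L) → L) (hp : IsLatticePolynomial p) :
    (∀ t t' : Fin n → L, p (fun i => t i ⊓ t' i) = p t ⊓ p t') ↔
      ∃ (B : Finset (Fin n)) (hB : B.Nonempty), ∀ t : Fin n → L, p t = B.inf' hB t := by
  refine ⟨hp.exists_eq_inf'_of_map_inf, ?_⟩
  rintro ⟨B, hB, hpB⟩ t t'
  simp only [hpB]
  exact Finset.inf'_inf_inf' hB t t'
end

section
/- A lattice polynomial function p : L^n → L over a linear order L is symmetric (invariant under all permutations of its arguments) if and only if p equals the k-th order statistic function f_k for some k ∈ [n], where f_k(t) returns the k-th smallest of t_1,…,t_n. -/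
/-- The `k`-th order statistic function (`k`-th smallest value, `1 ≤ k ≤ n`), via the
representation `f_k(t) = ⋁_{|A| = n-k+1} ⋀_{i∈A} t_i`. -/
def kthOrderStatistic {L : Type*} [LinearOrder L] (n k : ℕ) (hk : 1 ≤ k) (hkn : k ≤ n)
    (t : Fin n → L) : L :=
  ((Finset.univ : Finset (Finset (Fin n))).filter fun A => A.card = n - k + 1).attach.sup'
    (by
      have h : n - k + 1 ≤ n := by omega
      obtain ⟨A, -, hA⟩ := Finset.exists_subset_card_eq
        (s := (Finset.univ : Finset (Fin n))) (n := n - k + 1) (by simpa using h)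
      exact Finset.attach_nonempty_iff.mpr
        ⟨A, Finset.mem_filter.mpr ⟨Finset.mem_univ _, hA⟩⟩)
    (fun A =>
      A.1.inf'
        (by
          have hA := (Finset.mem_filter.mp A.2).2
          exact Finset.card_pos.mp (by omega))
        t)

/-!
Over a linear order every lattice polynomial function has a disjunctive normal form
`p t = ⋁_{A ∈ 𝒜} ⋀_{i ∈ A} t i`, and two functions with the same normal form agree. If `p` is
symmetric and `A₀ ∈ 𝒜` has minimal size `m`, then every `m`-set is the image of `A₀` under a
permutation, so by symmetry every `m`-set can be added to `𝒜`, while every member of `𝒜` can be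
shrunk to an `m`-set. Hence `p` has the normal form `{A | #A = m}` of the order statistic
`f_{n-m+1}`.
-/

/-- `p t = ⋁_{A ∈ 𝒜} ⋀_{i ∈ A} t i`, phrased through lower bounds so that no nonemptiness proofs
are needed. -/
def IsDNF {ι L : Type*} [LinearOrder L] (𝒜 : Finset (Finset ι)) (p : (ι → L) → L) : Prop :=
  ∀ t c, c ≤ p t ↔ ∃ A ∈ 𝒜, ∀ i ∈ A, c ≤ t i

namespace IsDNF

variable {ι L : Type*} [LinearOrder L] {𝒜 : Finset (Finset ι)} {p q : (ι → L) → L}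

theorem eq (hp : IsDNF 𝒜 p) (hq : IsDNF 𝒜 q) : p = q :=
  funext fun t => eq_of_forall_le_iff fun c => (hp t c).trans (hq t c).symm

theorem apply_comp_perm_of_powersetCard [Fintype ι] [DecidableEq ι] {m : ℕ}
    (hp : IsDNF (Finset.powersetCard m Finset.univ) p) (σ : Equiv.Perm ι) (t : ι → L) :
    p (t ∘ σ) = p t := by
  refine eq_of_forall_le_iff fun c => ?_
  simp only [hp _ c, Finset.mem_powersetCard_univ, Function.comp_apply]
  constructor
  · rintro ⟨A, hA, hc⟩
    exact ⟨A.map σ.toEmbedding, by rwa [Finset.card_map], Finset.forall_mem_map.2 hc⟩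
  · rintro ⟨B, hB, hc⟩
    exact ⟨B.map σ.symm.toEmbedding, by rwa [Finset.card_map],
      Finset.forall_mem_map.2 fun i hi => by simpa using hc i hi⟩

theorem powersetCard_of_apply_comp_perm [Fintype ι] [DecidableEq ι] (hp : IsDNF 𝒜 p)
    (hsym : ∀ (σ : Equiv.Perm ι) t, p (t ∘ σ) = p t) {A₀ : Finset ι} (hA₀ : A₀ ∈ 𝒜)
    (hmin : ∀ A ∈ 𝒜, A₀.card ≤ A.card) :
    IsDNF (Finset.powersetCard A₀.card Finset.univ) p := by
  intro t c
  simp only [Finset.mem_powersetCard_univ]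
  constructor
  · intro hc
    obtain ⟨A, hA, hcA⟩ := (hp t c).1 hc
    obtain ⟨B, hBA, hB⟩ := Finset.exists_subset_card_eq (hmin A hA)
    exact ⟨B, hB, fun i hi => hcA i (hBA hi)⟩
  · rintro ⟨B, hB, hcB⟩
    have hcard : Fintype.card A₀ = Fintype.card B := by simp [hB]
    rw [← hsym (Fintype.equivOfCardEq hcard).extendSubtype]
    exact (hp _ c).2 ⟨A₀, hA₀, fun i hi => hcB _ (Equiv.extendSubtype_mem _ i hi)⟩

end IsDNF

open scoped FinsetFamily in
theorem IsLatticePolynomial.exists_isDNF {L : Type*} [LinearOrder L] {n : ℕ}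
    {p : (Fin n → L) → L} (hp : IsLatticePolynomial p) :
    ∃ 𝒜 : Finset (Finset (Fin n)), 𝒜.Nonempty ∧ ∅ ∉ 𝒜 ∧ IsDNF 𝒜 p := by
  induction hp with
  | proj k =>
    exact ⟨{{k}}, by simp, by simp, fun t c => by simp⟩
  | inf _ _ ihp ihq =>
    obtain ⟨𝒜, h𝒜, h𝒜empty, hp⟩ := ihp
    obtain ⟨ℬ, hℬ, hℬempty, hq⟩ := ihq
    refine ⟨𝒜 ⊻ ℬ, h𝒜.sups hℬ, ?_, fun t c => ?_⟩
    · simp only [Finset.mem_sups, Finset.sup_eq_union, Finset.union_eq_empty, not_exists,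
        not_and]
      rintro A hA B - rfl -
      exact h𝒜empty hA
    · simp only [le_inf_iff, hp t c, hq t c, Finset.mem_sups]
      constructor
      · rintro ⟨⟨A, hA, hcA⟩, ⟨B, hB, hcB⟩⟩
        refine ⟨A ⊔ B, ⟨A, hA, B, hB, rfl⟩, fun i hi => ?_⟩
        rcases Finset.mem_union.1 hi with hi | hi
        exacts [hcA i hi, hcB i hi]
      · rintro ⟨_, ⟨A, hA, B, hB, rfl⟩, hc⟩
        exact ⟨⟨A, hA, fun i hi => hc i (Finset.mem_union_left _ hi)⟩,
          ⟨B, hB, fun i hi => hc i (Finset.mem_union_right _ hi)⟩⟩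
  | sup _ _ ihp ihq =>
    obtain ⟨𝒜, h𝒜, h𝒜empty, hp⟩ := ihp
    obtain ⟨ℬ, -, hℬempty, hq⟩ := ihq
    refine ⟨𝒜 ∪ ℬ, h𝒜.mono Finset.subset_union_left, by simp [h𝒜empty, hℬempty],
      fun t c => ?_⟩
    simp only [le_sup_iff, hp t c, hq t c, Finset.mem_union, or_and_right, exists_or]

theorem isDNF_kthOrderStatistic {L : Type*} [LinearOrder L] {n k : ℕ} (hk : 1 ≤ k)
    (hkn : k ≤ n) :
    IsDNF (Finset.powersetCard (n - k + 1) Finset.univ)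
      (kthOrderStatistic (L := L) n k hk hkn) := by
  intro t c
  simp [kthOrderStatistic, Finset.le_sup'_iff, Finset.le_inf'_iff]

/-- A lattice polynomial function is symmetric iff it is a `k`-th order statistic function. -/
theorem latticePolynomial_symmetric_iff_orderStatistic {L : Type*} [LinearOrder L] {n : ℕ}
    (p : (Fin n → L) → L) (hp : IsLatticePolynomial p) :
    (∀ (σ : Equiv.Perm (Fin n)) (t : Fin n → L), p (t ∘ σ) = p t) ↔
      ∃ (k : ℕ) (hk : 1 ≤ k) (hkn : k ≤ n),
        ∀ t : Fin n → L, p t = kthOrderStatistic n k hk hkn t := by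
  constructor
  · intro hsym
    obtain ⟨𝒜, h𝒜, hempty, hdnf⟩ := hp.exists_isDNF
    obtain ⟨A₀, hA₀, hmin⟩ := 𝒜.exists_min_image Finset.card h𝒜
    have hpos : 1 ≤ A₀.card :=
      Finset.card_pos.2 (Finset.nonempty_iff_ne_empty.2 (ne_of_mem_of_not_mem hA₀ hempty))
    have hle : A₀.card ≤ n := by simpa using A₀.card_le_univ
    obtain ⟨k, hk, hkn, hcard⟩ : ∃ k, ∃ _ : 1 ≤ k, ∃ _ : k ≤ n, n - k + 1 = A₀.card :=
      ⟨n - A₀.card + 1, by omega, by omega, by omega⟩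
    have hdnf_min := hdnf.powersetCard_of_apply_comp_perm hsym hA₀ hmin
    rw [← hcard] at hdnf_min
    exact ⟨k, hk, hkn, congrFun (hdnf_min.eq (isDNF_kthOrderStatistic hk hkn))⟩
  · rintro ⟨k, hk, hkn, hrep⟩ σ t
    rw [hrep, hrep]
    exact (isDNF_kthOrderStatistic hk hkn).apply_comp_perm_of_powersetCard σ t
end

section
/- Let T_1,…,T_n be independent nonnegative random variables with P(T_i > t) = exp(−λ_i t), λ_i > 0, let v : 2^{[n]} → {0,1} be nondecreasing and nonconstant with Möbius transform m_v, and let T_S = p_w(T_1,…,T_n) be the corresponding lattice polynomial lifetime. Then E[T_S] = Σ_{∅ ≠ A ⊆ [n]} m_v(A)/λ_A, where λ_A = Σ_{i∈A} λ_i. -/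
/-!
At time `t` the system works iff the set `U_t = {i | t < T_i}` of working components has
`v(U_t) = 1`, so by Möbius inversion `1{t < T_S} = v(U_t) = Σ_B m_v(B) 1{B ⊆ U_t}`. Taking
expectations and using independence, `P(t < T_S) = Σ_B m_v(B) exp(-λ_B t)`, where the term
`B = ∅` vanishes because `v(∅) = 0`. Integrating this survival function over `(0, ∞)`
(layer-cake formula) gives `Σ_{B ≠ ∅} m_v(B) / λ_B`.
-/

open scoped ENNReal
open Finset MeasureTheory ProbabilityTheory

section Moebius

variable {α R : Type*} [Ring R]

def moebiusTransform (f : Finset α → R) (A : Finset α) : R :=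
  ∑ B ∈ A.powerset, (-1) ^ (#A - #B) * f B

theorem sum_Icc_neg_one_pow_card_sub [DecidableEq α] {C U : Finset α} (hCU : C ⊆ U) :
    ∑ B ∈ Icc C U, (-1 : R) ^ (#B - #C) = if C = U then 1 else 0 := by
  have hinj : Set.InjOn (C ∪ ·) (U \ C).powerset := fun D hD E hE hDE => by
    have hD' := disjoint_of_subset_right (mem_powerset.mp hD) disjoint_sdiff
    have hE' := disjoint_of_subset_right (mem_powerset.mp hE) disjoint_sdiff
    simpa [union_sdiff_cancel_left hD', union_sdiff_cancel_left hE'] using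
      congrArg (· \ C) hDE
  rw [Icc_eq_image_powerset hCU, sum_image hinj]
  have hcard : ∀ D ∈ (U \ C).powerset, #(C ∪ D) - #C = #D := fun D hD => by
    rw [card_union_of_disjoint (disjoint_of_subset_right (mem_powerset.mp hD) disjoint_sdiff),
      Nat.add_sub_cancel_left]
  rw [sum_congr rfl fun D hD => by rw [hcard D hD]]
  have halternating := congrArg (Int.cast : ℤ → R) (sum_powerset_neg_one_pow_card (x := U \ C))
  push_cast at halternating
  have hempty : U \ C = ∅ ↔ C = U := by
    rw [sdiff_eq_empty_iff_subset]; exact ⟨hCU.antisymm, fun h => h ▸ subset_rfl⟩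
  rw [halternating]
  exact if_congr hempty rfl rfl

theorem sum_powerset_moebiusTransform [DecidableEq α] (f : Finset α → R) (U : Finset α) :
    ∑ B ∈ U.powerset, moebiusTransform f B = f U := by
  unfold moebiusTransform
  rw [sum_comm' (t' := U.powerset) (s' := fun C => Icc C U) (by
    intro B C; simp only [mem_powerset, mem_Icc]
    exact ⟨fun h => ⟨⟨h.2, h.1⟩, h.2.trans h.1⟩, fun h => ⟨h.1.2, h.1.1⟩⟩)]
  simp_rw [← sum_mul]
  rw [sum_congr rfl fun C hC => by rw [sum_Icc_neg_one_pow_card_sub (mem_powerset.mp hC)]]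
  simp

end Moebius

theorem volume_restrict_Ioi_setOf_ofReal_lt (x : ℝ≥0∞) :
    volume.restrict (Set.Ioi 0) {t : ℝ | ENNReal.ofReal t < x} = x := by
  rw [Measure.restrict_apply' measurableSet_Ioi]
  rcases eq_or_ne x ⊤ with rfl | hx
  · simp
  · have hIoo : {t : ℝ | ENNReal.ofReal t < x} ∩ Set.Ioi 0 = Set.Ioo 0 x.toReal := by
      ext t
      rw [Set.mem_inter_iff, Set.mem_Ioo, and_comm]
      exact and_congr_right fun ht => ENNReal.ofReal_lt_iff_lt_toReal (le_of_lt ht) hx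
    rw [hIoo, Real.volume_Ioo, sub_zero, ENNReal.ofReal_toReal hx]

theorem lintegral_eq_lintegral_meas_ofReal_lt {α : Type*} [MeasurableSpace α] (μ : Measure α)
    [SFinite μ] {f : α → ℝ≥0∞} (hf : Measurable f) :
    ∫⁻ ω, f ω ∂μ = ∫⁻ t in Set.Ioi 0, μ {ω | ENNReal.ofReal t < f ω} := by
  have hS : MeasurableSet {p : α × ℝ | ENNReal.ofReal p.2 < f p.1} :=
    measurableSet_lt (ENNReal.measurable_ofReal.comp measurable_snd) (hf.comp measurable_fst)
  calc ∫⁻ ω, f ω ∂μ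
      = ∫⁻ ω, volume.restrict (Set.Ioi 0) {t : ℝ | ENNReal.ofReal t < f ω} ∂μ := by
        simp_rw [volume_restrict_Ioi_setOf_ofReal_lt]
    _ = (μ.prod (volume.restrict (Set.Ioi 0))) {p | ENNReal.ofReal p.2 < f p.1} :=
        (Measure.prod_apply hS).symm
    _ = ∫⁻ t in Set.Ioi 0, μ {ω | ENNReal.ofReal t < f ω} := Measure.prod_apply_symm hS

theorem Finset.measurable_sup {δ α ι : Type*} [MeasurableSpace δ] [MeasurableSpace α]
    [SemilatticeSup α] [OrderBot α] [MeasurableSup₂ α] {s : Finset ι} {f : ι → δ → α}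
    (hf : ∀ i ∈ s, Measurable (f i)) : Measurable (s.sup f) :=
  Finset.sup_induction measurable_const (fun _ h₁ _ h₂ => h₁.sup h₂) hf

theorem Finset.measurable_inf {δ α ι : Type*} [MeasurableSpace δ] [MeasurableSpace α]
    [SemilatticeInf α] [OrderTop α] [MeasurableInf₂ α] {s : Finset ι} {f : ι → δ → α}
    (hf : ∀ i ∈ s, Measurable (f i)) : Measurable (s.inf f) :=
  Finset.inf_induction measurable_const (fun _ h₁ _ h₂ => h₁.inf h₂) hf

section LatticePolynomial

variable {ι β : Type*} [Fintype ι]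

def latticePolynomial [Lattice β] [BoundedOrder β] (v : Finset ι → ℤ) (x : ι → β) : β :=
  (univ.filter fun A => v A = 1).sup fun A => A.inf x

theorem lt_latticePolynomial_iff [LinearOrder β] [BoundedOrder β] {v : Finset ι → ℤ}
    (hv01 : ∀ A, v A = 0 ∨ v A = 1) (hmono : Monotone v) (x : ι → β) {a : β} (ha : a < ⊤) :
    a < latticePolynomial v x ↔ v {i | a < x i} = 1 := by
  simp only [latticePolynomial, Finset.lt_sup_iff, Finset.lt_inf_iff ha, mem_filter, mem_univ,
    true_and]
  constructor
  · rintro ⟨A, hA, hlt⟩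
    have := hmono (b := ({i | a < x i} : Finset ι)) fun i hi => by simpa using hlt i hi
    rcases hv01 {i | a < x i} with h | h <;> omega
  · intro h
    exact ⟨_, h, fun i hi => by simpa using hi⟩

theorem measurable_latticePolynomial {Ω : Type*} [MeasurableSpace Ω] (v : Finset ι → ℤ)
    {T : ι → Ω → ℝ≥0∞} (hT : ∀ i, Measurable (T i)) :
    Measurable fun ω => latticePolynomial v (T · ω) := by
  have hsup : (fun ω => latticePolynomial v (T · ω)) =
      (univ.filter fun A => v A = 1).sup fun A => A.inf T := by
    ext ω; simp [latticePolynomial, Finset.sup_apply, Finset.inf_apply]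
  rw [hsup]
  exact Finset.measurable_sup fun A _ => Finset.measurable_inf fun i _ => hT i

end LatticePolynomial

theorem integral_comp_eq_sum_moebiusTransform_mul {Ω ι : Type*} [MeasurableSpace Ω] [Fintype ι]
    [DecidableEq ι] (μ : Measure Ω) [IsFiniteMeasure μ] (f : Finset ι → ℝ) {U : Ω → Finset ι}
    (hU : ∀ B, MeasurableSet {ω | B ⊆ U ω}) :
    ∫ ω, f (U ω) ∂μ = ∑ B, moebiusTransform f B * μ.real {ω | B ⊆ U ω} := by
  have hpoint : ∀ ω, f (U ω) = ∑ B, moebiusTransform f B * {ω | B ⊆ U ω}.indicator 1 ω := by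
    intro ω
    simp only [Set.indicator_apply, Set.mem_ofPred_eq, Pi.one_apply, mul_ite, mul_one, mul_zero]
    rw [← sum_filter, ← sum_powerset_moebiusTransform f (U ω)]
    congr 1
    ext B; simp
  simp_rw [hpoint]
  rw [integral_finsetSum _ fun B _ => ((integrable_const 1).indicator (hU B)).const_mul _]
  simp_rw [integral_const_mul, integral_indicator_one (hU _)]

theorem ProbabilityTheory.iIndepFun.measure_biInter_ofReal_lt_eq_exp_sum {Ω ι : Type*}
    [MeasurableSpace Ω] {μ : Measure Ω} {T : ι → Ω → ℝ≥0∞} (hind : iIndepFun T μ)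
    {lam : ι → ℝ} {t : ℝ}
    (hdist : ∀ i, μ {ω | ENNReal.ofReal t < T i ω} = ENNReal.ofReal (Real.exp (-lam i * t)))
    (B : Finset ι) :
    μ (⋂ i ∈ B, {ω | ENNReal.ofReal t < T i ω}) =
      ENNReal.ofReal (Real.exp (-(∑ i ∈ B, lam i) * t)) := by
  rw [hind.meas_biInter (s := fun i => {ω | ENNReal.ofReal t < T i ω})
    fun i _ => ⟨Set.Ioi _, measurableSet_Ioi, rfl⟩]
  simp_rw [hdist]
  rw [← ENNReal.ofReal_prod_of_nonneg fun i _ => (Real.exp_pos _).le, ← Real.exp_sum]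
  simp only [neg_mul, sum_mul, sum_neg_distrib]

theorem toReal_lintegral_eq_sum_div_of_measureReal_lt {α κ : Type*} [MeasurableSpace α]
    (μ : Measure α) [IsFiniteMeasure μ] {f : α → ℝ≥0∞} (hf : Measurable f) (s : Finset κ)
    (c r : κ → ℝ) (hr : ∀ k ∈ s, 0 < r k)
    (hsurv : ∀ t, 0 < t →
      μ.real {ω | ENNReal.ofReal t < f ω} = ∑ k ∈ s, c k * Real.exp (-r k * t)) :
    (∫⁻ ω, f ω ∂μ).toReal = ∑ k ∈ s, c k / r k := by
  have hanti : Antitone fun t => μ {ω | ENNReal.ofReal t < f ω} := fun t t' htt' =>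
    measure_mono fun ω hω => lt_of_le_of_lt (ENNReal.ofReal_le_ofReal htt') hω
  have hint : ∀ k ∈ s, IntegrableOn (fun t => c k * Real.exp (-r k * t)) (Set.Ioi 0) :=
    fun k hk => (exp_neg_integrableOn_Ioi 0 (hr k hk)).const_mul _
  simp only [measureReal_def] at hsurv
  rw [lintegral_eq_lintegral_meas_ofReal_lt μ hf,
    ← integral_toReal hanti.measurable.aemeasurable (.of_forall fun _ => measure_lt_top _ _),
    setIntegral_congr_fun measurableSet_Ioi hsurv, integral_finsetSum s hint]
  refine sum_congr rfl fun k hk => ?_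
  rw [integral_const_mul, integral_exp_mul_Ioi (neg_lt_zero.mpr (hr k hk))]
  simp [div_eq_mul_inv]

theorem measureReal_ofReal_lt_latticePolynomial {Ω ι : Type*} [MeasurableSpace Ω] [Fintype ι]
    [DecidableEq ι] (μ : Measure Ω) [IsFiniteMeasure μ] {T : ι → Ω → ℝ≥0∞}
    (hT : ∀ i, Measurable (T i)) (hind : iIndepFun T μ) {lam : ι → ℝ} {t : ℝ}
    (hdist : ∀ i, μ {ω | ENNReal.ofReal t < T i ω} = ENNReal.ofReal (Real.exp (-lam i * t)))
    {v : Finset ι → ℤ} (hv01 : ∀ A, v A = 0 ∨ v A = 1) (hmono : Monotone v) :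
    μ.real {ω | ENNReal.ofReal t < latticePolynomial v (T · ω)} =
      ∑ B, moebiusTransform (fun A => (v A : ℝ)) B * Real.exp (-(∑ i ∈ B, lam i) * t) := by
  set U : Ω → Finset ι := fun ω => {i | ENNReal.ofReal t < T i ω}
  have hsubset : ∀ B, {ω | B ⊆ U ω} = ⋂ i ∈ B, {ω | ENNReal.ofReal t < T i ω} := fun B => by
    ext ω; simp [U, Finset.subset_iff]
  have hUmeas : ∀ B, MeasurableSet {ω | B ⊆ U ω} := fun B => by
    rw [hsubset]; exact .biInter B.countable_toSet fun i _ => hT i measurableSet_Ioi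
  have hindicator : ∀ ω, (v (U ω) : ℝ) =
      {ω | ENNReal.ofReal t < latticePolynomial v (T · ω)}.indicator 1 ω := fun ω => by
    simp only [Set.indicator_apply, Set.mem_ofPred_eq,
      lt_latticePolynomial_iff hv01 hmono _ ENNReal.ofReal_lt_top]
    rcases hv01 (U ω) with h | h <;> simp [U, h]
  calc μ.real {ω | ENNReal.ofReal t < latticePolynomial v (T · ω)}
      = ∫ ω, (v (U ω) : ℝ) ∂μ := by
        simp_rw [hindicator]
        exact (integral_indicator_one ((measurable_latticePolynomial v hT) measurableSet_Ioi)).symm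
    _ = ∑ B, moebiusTransform (fun A => (v A : ℝ)) B * μ.real {ω | B ⊆ U ω} :=
        integral_comp_eq_sum_moebiusTransform_mul μ (fun A => (v A : ℝ)) hUmeas
    _ = _ := by
        simp_rw [hsubset, measureReal_def, hind.measure_biInter_ofReal_lt_eq_exp_sum hdist,
          ENNReal.toReal_ofReal (Real.exp_pos _).le]

/-- For independent exponentially distributed lifetimes (`P(T_i > t) = exp(-λ_i t)`) and a
nondecreasing nonconstant structure `v`, the mean system lifetime of
`T_S = ⋁_{A : v(A)=1} ⋀_{i∈A} T_i` equals `Σ_{∅ ≠ A} m_v(A)/λ_A`, where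
`m_v` is the Möbius transform of `v` and `λ_A = Σ_{i∈A} λ_i`. -/
theorem mttf_exponential {Ω : Type*} [MeasurableSpace Ω] (μ : MeasureTheory.Measure Ω)
    [MeasureTheory.IsProbabilityMeasure μ]
    (n : ℕ) (T : Fin n → Ω → ℝ≥0∞) (hmeas : ∀ i, Measurable (T i))
    (lam : Fin n → ℝ) (hlam : ∀ i, 0 < lam i)
    (hdist : ∀ i, ∀ t : ℝ, 0 ≤ t →
      μ {ω | ENNReal.ofReal t < T i ω} = ENNReal.ofReal (Real.exp (-(lam i) * t)))
    (hind : ProbabilityTheory.iIndepFun T μ)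
    (v : Finset (Fin n) → ℤ)
    (hv01 : ∀ A, v A = 0 ∨ v A = 1)
    (hmono : ∀ A B : Finset (Fin n), A ⊆ B → v A ≤ v B)
    (hnc : ∃ A B : Finset (Fin n), v A ≠ v B)
    (TS : Ω → ℝ≥0∞)
    (hTS : ∀ ω, TS ω =
      (Finset.univ.filter fun A : Finset (Fin n) => v A = 1).sup
        (fun A => A.inf fun i => T i ω)) :
    (∫⁻ ω, TS ω ∂μ).toReal =
      ∑ A ∈ (Finset.univ : Finset (Finset (Fin n))).erase ∅,
        (∑ B ∈ A.powerset, (-1 : ℝ) ^ (A.card - B.card) * (v B : ℝ)) / (∑ i ∈ A, lam i) := by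
  have hv0 : v ∅ = 0 := by
    obtain ⟨A, B, hAB⟩ := hnc
    have := hmono ∅ A (empty_subset A)
    have := hmono ∅ B (empty_subset B)
    rcases hv01 ∅ with h | h <;> rcases hv01 A with hA | hA <;> rcases hv01 B with hB | hB <;>
      omega
  obtain rfl : TS = fun ω => latticePolynomial v (T · ω) := funext hTS
  refine toReal_lintegral_eq_sum_div_of_measureReal_lt μ (measurable_latticePolynomial v hmeas) _
    (moebiusTransform fun A => (v A : ℝ)) (fun A => ∑ i ∈ A, lam i)
    (fun A hA => sum_pos (fun i _ => hlam i) (nonempty_of_ne_empty (ne_of_mem_erase hA)))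
    fun t ht => ?_
  rw [measureReal_ofReal_lt_latticePolynomial μ hmeas hind (fun i => hdist i t ht.le) hv01
    (fun A B => hmono A B), ← sum_erase_add _ _ (mem_univ ∅)]
  simp [moebiusTransform, hv0]
end
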